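/- For every modal theory T and every possible-world structure P, the 4-valued operator satisfies D_T(P,P) = (d_T(P), d_T(P)), where d_T(P) = {I : H(P,I)(φ)=true for all φ∈T} is Moore's operator; consequently (P,P) is a fixpoint of the 4-valued operator iff P is a fixpoint of Moore's operator. -/
import Mathlib


/-- Modal propositional formulas: atoms, Boolean connectives, and the modal operator `K`. -/
inductive MF (At : Type) : Type
  | atom : At → MF At
  | neg : MF At → MF At
  | conj : MF At → MF At → MF At
  | disj : MF At → MF At → MF At
  | box : MF At → MF At

/-- Moore's truth function `H(P,I)`. -/
def Hm {At : Type} (Q : Set (At → Bool)) (I : At → Bool) : MF At → Prop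
  | .atom p => I p = true
  | .neg φ => ¬ Hm Q I φ
  | .conj φ ψ => Hm Q I φ ∧ Hm Q I ψ
  | .disj φ ψ => Hm Q I φ ∨ Hm Q I ψ
  | .box φ => ∀ J ∈ Q, Hm Q J φ

/-- The belief-pair truth function `h((P,S),I)`. -/
def hb {At : Type} (P S : Set (At → Bool)) (I : At → Bool) : MF At → Prop
  | .atom p => I p = true
  | .neg φ => ¬ hb S P I φ
  | .conj φ ψ => hb P S I φ ∧ hb P S I ψ
  | .disj φ ψ => hb P S I φ ∨ hb P S I ψ
  | .box φ => ∀ J ∈ P, hb P S J φ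

/-- The 4-valued operator `D_T` on belief pairs. -/
def DT {At : Type} (T : Set (MF At)) (B : Set (At → Bool) × Set (At → Bool)) :
    Set (At → Bool) × Set (At → Bool) :=
  ({I | ∀ φ ∈ T, hb B.2 B.1 I φ}, {I | ∀ φ ∈ T, hb B.1 B.2 I φ})

/-- Moore's operator `d_T` on possible-world structures. -/
def dT {At : Type} (T : Set (MF At)) (P : Set (At → Bool)) : Set (At → Bool) :=
  {I | ∀ φ ∈ T, Hm P I φ}

lemma hb_diag {At : Type} (P : Set (At → Bool)) (I : At → Bool) (φ : MF At) :
    hb P P I φ ↔ Hm P I φ := by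
  induction φ generalizing I with
  | atom p => rfl
  | neg φ ih => simp [hb, Hm, ih]
  | conj φ ψ ih1 ih2 => simp [hb, Hm, ih1, ih2]
  | disj φ ψ ih1 ih2 => simp [hb, Hm, ih1, ih2]
  | box φ ih => simp [hb, Hm, ih]

/-- `D_T(P,P) = (d_T(P), d_T(P))`; consequently `(P,P)` is a fixpoint of the 4-valued
operator iff `P` is a fixpoint of Moore's operator. -/
theorem DT_diag_eq_Moore {At : Type} (T : Set (MF At)) (P : Set (At → Bool)) :
    DT T (P, P) = (dT T P, dT T P) ∧ (DT T (P, P) = (P, P) ↔ dT T P = P) := by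
  have h : DT T (P, P) = (dT T P, dT T P) := by
    simp [DT, dT, hb_diag]
  refine ⟨h, ?_⟩
  rw [h]
  constructor
  · intro he; exact (Prod.mk.injEq _ _ _ _ ▸ he).1
  · intro he; rw [he]
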